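/- arXiv:1909.13288 — 2 statements merged into one kernel-verified Lean document; each statement's English description precedes it below -/
import Mathlib

section
/- Define f(η) = A_0(η)/(A_2(η) − A_4(η)). Then there exists a unique η* ∈ ℝ such that f is strictly decreasing on (−∞, η*] and strictly increasing on [η*, +∞); moreover η* < 0, f(0) = 15/2 and f'(0) = 5/7. -/
/-!
Differentiating under the integral sign gives `A_k' = -A_{k+2}`, so `f' = N / (A₂ - A₄)²` with
`N = A₀ (A₄ - A₆) - A₂ (A₂ - A₄)`, and `N' = G - N` where
`G = A₀ ∫ (z² - z⁴)² e^{-ηz²} - (∫ (z² - z⁴) e^{-ηz²})²` is positive by the strict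
Cauchy–Schwarz inequality. Hence `e^η N` is strictly increasing, so `f'` changes sign at most once,
from negative to positive. At `η = 0` the moments are `1/(k+1)`, so `N(0) = 4/315 > 0`.
Integration by parts gives `e^{-η} = (k+1) A_k - 2η A_{k+2}`, which together with
`e^{10z²} ≥ e^{10(2z-1)}` shows `f(-10) > f(0)`; so `N` is negative somewhere in `(-10, 0)`, and the zero of `e^η N` is the
minimiser `η* < 0`.
-/

open Real MeasureTheory Set Filter

/-- `A k η = ∫_0^1 z^k e^{-η z²} dz`. -/
noncomputable def A (k : ℕ) (η : ℝ) : ℝ :=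
  ∫ z in (0:ℝ)..1, z ^ k * Real.exp (-η * z ^ 2)

/-- `B(η, α) = 3 e^{-η} / A₀(η) − (3 − 2η + 4η²/α)`. -/
noncomputable def B (η α : ℝ) : ℝ :=
  3 * Real.exp (-η) / A 0 η - (3 - 2 * η + 4 * η ^ 2 / α)

lemma strictAntiOn_Iic_and_strictMonoOn_Ici_of_hasDerivAt {g g' : ℝ → ℝ} {s : ℝ}
    (hg : ∀ x, HasDerivAt g (g' x) x) (hneg : ∀ x < s, g' x < 0) (hpos : ∀ x, s < x → 0 < g' x) :
    StrictAntiOn g (Iic s) ∧ StrictMonoOn g (Ici s) := by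
  have hcont : Continuous g := continuous_iff_continuousAt.2 fun x => (hg x).continuousAt
  constructor
  · refine strictAntiOn_of_deriv_neg (convex_Iic s) hcont.continuousOn fun x hx => ?_
    rw [(hg x).deriv]
    exact hneg x (by simpa using hx)
  · refine strictMonoOn_of_deriv_pos (convex_Ici s) hcont.continuousOn fun x hx => ?_
    rw [(hg x).deriv]
    exact hpos x (by simpa using hx)

lemma eq_of_strictAntiOn_Iic_of_strictMonoOn_Ici {α β : Type*} [LinearOrder α] [Preorder β]
    {g : α → β} {s t : α} (hs : StrictAntiOn g (Iic s) ∧ StrictMonoOn g (Ici s))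
    (ht : StrictAntiOn g (Iic t) ∧ StrictMonoOn g (Ici t)) : s = t := by
  rcases lt_trichotomy s t with h | h | h
  · exact ((hs.2 self_mem_Ici h.le h).trans (ht.1 h.le self_mem_Iic h)).false.elim
  · exact h
  · exact ((ht.2 self_mem_Ici h.le h).trans (hs.1 h.le self_mem_Iic h)).false.elim

lemma A_zero_right (k : ℕ) : A k 0 = 1 / (k + 1) := by
  simp [A, integral_pow]

lemma hasDerivAt_A (k : ℕ) (η : ℝ) : HasDerivAt (A k) (-A (k + 2) η) η := by
  have hbound : ∀ t ∈ uIoc (0 : ℝ) 1, ∀ x ∈ Metric.ball η 1,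
      ‖-(t ^ (k + 2) * exp (-x * t ^ 2))‖ ≤ exp (|η| + 1) := by
    intro t ht x hx
    rw [uIoc_of_le zero_le_one] at ht
    have ht2 : t ^ 2 ≤ 1 := pow_le_one₀ ht.1.le ht.2
    have hx : |x| ≤ |η| + 1 := by
      have := abs_sub_abs_le_abs_sub x η
      rw [Metric.mem_ball, Real.dist_eq] at hx
      linarith
    rw [norm_neg, norm_of_nonneg (mul_nonneg (pow_nonneg ht.1.le _) (exp_pos _).le)]
    calc t ^ (k + 2) * exp (-x * t ^ 2) ≤ 1 * exp (|η| + 1) := by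
          gcongr
          · exact pow_le_one₀ ht.1.le ht.2
          · nlinarith [mul_le_mul_of_nonneg_right (neg_le_abs x) (sq_nonneg t),
              mul_le_mul_of_nonneg_left ht2 (abs_nonneg x)]
      _ = exp (|η| + 1) := one_mul _
  have hderiv : ∀ t x : ℝ, HasDerivAt (fun x => t ^ k * exp (-x * t ^ 2))
      (-(t ^ (k + 2) * exp (-x * t ^ 2))) x := fun t x => by
    have := (((hasDerivAt_neg x).mul_const (t ^ 2)).exp).const_mul (t ^ k)
    exact this.congr_deriv (by ring)
  have h := intervalIntegral.hasDerivAt_integral_of_dominated_loc_of_deriv_le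
    (μ := volume) (F' := fun x t => -(t ^ (k + 2) * exp (-x * t ^ 2)))
    (Metric.ball_mem_nhds η one_pos)
    (Eventually.of_forall fun x =>
      (by fun_prop : Continuous fun t : ℝ => t ^ k * exp (-x * t ^ 2)).aestronglyMeasurable)
    ((by fun_prop : Continuous fun t : ℝ => t ^ k * exp (-η * t ^ 2)).intervalIntegrable 0 1)
    (by fun_prop : Continuous fun t : ℝ => -(t ^ (k + 2) * exp (-η * t ^ 2))).aestronglyMeasurable
    (ae_of_all _ hbound) intervalIntegrable_const (ae_of_all _ fun t _ x _ => hderiv t x)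
  rw [intervalIntegral.integral_neg] at h
  exact h.2

lemma integral_mul_exp_pos {g : ℝ → ℝ} (hg : Continuous g)
    (hnonneg : ∀ z ∈ Icc (0 : ℝ) 1, 0 ≤ g z) {c : ℝ} (hc : c ∈ Icc (0 : ℝ) 1) (hgc : 0 < g c)
    (η : ℝ) :
    0 < ∫ z in (0 : ℝ)..1, g z * exp (-η * z ^ 2) :=
  intervalIntegral.integral_pos zero_lt_one (by fun_prop)
    (fun z hz => mul_nonneg (hnonneg z (Ioc_subset_Icc_self hz)) (exp_pos _).le)
    ⟨c, hc, mul_pos hgc (exp_pos _)⟩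

lemma A_zero_pos (η : ℝ) : 0 < A 0 η := by
  simpa only [A, pow_zero] using integral_mul_exp_pos (g := fun _ => 1) continuous_const
    (fun _ _ => zero_le_one) (left_mem_Icc.2 zero_le_one) one_pos η

lemma A_two_sub_A_four_pos (η : ℝ) : 0 < A 2 η - A 4 η := by
  have h := integral_mul_exp_pos (g := fun z => z ^ 2 - z ^ 4) (by fun_prop)
    (fun z hz => by
      nlinarith [mul_nonneg (sq_nonneg z) (sub_nonneg.2 (pow_le_one₀ hz.1 hz.2 : z ^ 2 ≤ 1))])
    (c := 1 / 2) ⟨by norm_num, by norm_num⟩ (by norm_num) η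
  simpa (disch := exact Continuous.intervalIntegrable (by fun_prop) _ _) only
    [sub_mul, intervalIntegral.integral_sub, A] using h

lemma exp_neg_eq_A_recurrence (k : ℕ) (η : ℝ) :
    exp (-η) = (k + 1) * A k η - 2 * η * A (k + 2) η := by
  have hderiv : ∀ z ∈ uIcc (0 : ℝ) 1, HasDerivAt (fun z => z ^ (k + 1) * exp (-η * z ^ 2))
      ((k + 1) * (z ^ k * exp (-η * z ^ 2)) - 2 * η * (z ^ (k + 2) * exp (-η * z ^ 2))) z := by
    intro z _
    have := (hasDerivAt_pow (k + 1) z).mul (((hasDerivAt_pow 2 z).const_mul (-η)).exp)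
    refine this.congr_deriv ?_
    simp only [Nat.add_sub_cancel]
    push_cast
    ring
  have h := intervalIntegral.integral_eq_sub_of_hasDerivAt hderiv
    (Continuous.intervalIntegrable (by fun_prop) _ _)
  simp (disch := exact Continuous.intervalIntegrable (by fun_prop) _ _) only
    [intervalIntegral.integral_sub, intervalIntegral.integral_const_mul] at h
  simpa [A] using h.symm

lemma A_zero_neg_ten_ge : (exp 10 - exp (-10)) / 20 ≤ A 0 (-10) := by
  have hle : ∫ z in (0 : ℝ)..1, exp (20 * z - 10) ≤ A 0 (-10) :=
    intervalIntegral.integral_mono_on zero_le_one (Continuous.intervalIntegrable (by fun_prop) _ _)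
      (Continuous.intervalIntegrable (by fun_prop) _ _) fun z _ => by
        rw [pow_zero, one_mul, exp_le_exp]
        nlinarith [sq_nonneg (z - 1)]
  rw [intervalIntegral.integral_comp_mul_sub (fun x => exp x) (by norm_num : (20 : ℝ) ≠ 0),
    integral_exp] at hle
  norm_num at hle
  linarith

noncomputable def momentRatio (η : ℝ) : ℝ := A 0 η / (A 2 η - A 4 η)

noncomputable def momentRatioNum (η : ℝ) : ℝ :=
  A 0 η * (A 4 η - A 6 η) - A 2 η * (A 2 η - A 4 η)

noncomputable def cauchySchwarzGap (η : ℝ) : ℝ :=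
  A 0 η * (A 4 η - 2 * A 6 η + A 8 η) - (A 2 η - A 4 η) ^ 2

lemma integral_sq_mul_exp (η c d : ℝ) :
    ∫ z in (0 : ℝ)..1, (c * (z ^ 2 - z ^ 4) - d) ^ 2 * exp (-η * z ^ 2) =
      c ^ 2 * (A 4 η - 2 * A 6 η + A 8 η) - 2 * c * d * (A 2 η - A 4 η) + d ^ 2 * A 0 η := by
  have hexpand : ∀ z : ℝ, (c * (z ^ 2 - z ^ 4) - d) ^ 2 * exp (-η * z ^ 2) =
      c ^ 2 * (z ^ 4 * exp (-η * z ^ 2) - 2 * (z ^ 6 * exp (-η * z ^ 2))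
          + z ^ 8 * exp (-η * z ^ 2))
        - 2 * c * d * (z ^ 2 * exp (-η * z ^ 2) - z ^ 4 * exp (-η * z ^ 2))
        + d ^ 2 * (z ^ 0 * exp (-η * z ^ 2)) := fun z => by ring
  simp (disch := exact Continuous.intervalIntegrable (by fun_prop) _ _) only [hexpand,
    intervalIntegral.integral_add, intervalIntegral.integral_sub,
    intervalIntegral.integral_const_mul, A]

lemma cauchySchwarzGap_pos (η : ℝ) : 0 < cauchySchwarzGap η := by
  have hD := A_two_sub_A_four_pos η
  have h := integral_mul_exp_pos
    (g := fun z => (A 0 η * (z ^ 2 - z ^ 4) - (A 2 η - A 4 η)) ^ 2) (by fun_prop)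
    (fun _ _ => sq_nonneg _) (left_mem_Icc.2 zero_le_one) (by simp; nlinarith) η
  rw [integral_sq_mul_exp] at h
  have hfactor : A 0 η * cauchySchwarzGap η = A 0 η ^ 2 * (A 4 η - 2 * A 6 η + A 8 η)
      - 2 * A 0 η * (A 2 η - A 4 η) * (A 2 η - A 4 η) + (A 2 η - A 4 η) ^ 2 * A 0 η := by
    unfold cauchySchwarzGap; ring
  exact pos_of_mul_pos_right (hfactor ▸ h) (A_zero_pos η).le

lemma hasDerivAt_momentRatio (η : ℝ) :
    HasDerivAt momentRatio (momentRatioNum η / (A 2 η - A 4 η) ^ 2) η := by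
  have h := (hasDerivAt_A 0 η).div ((hasDerivAt_A 2 η).sub (hasDerivAt_A 4 η))
    (A_two_sub_A_four_pos η).ne'
  exact h.congr_deriv (by unfold momentRatioNum; simp only [Pi.sub_apply]; ring)

lemma hasDerivAt_momentRatioNum (η : ℝ) :
    HasDerivAt momentRatioNum (cauchySchwarzGap η - momentRatioNum η) η := by
  have h := ((hasDerivAt_A 0 η).mul ((hasDerivAt_A 4 η).sub (hasDerivAt_A 6 η))).sub
    ((hasDerivAt_A 2 η).mul ((hasDerivAt_A 2 η).sub (hasDerivAt_A 4 η)))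
  exact h.congr_deriv (by unfold cauchySchwarzGap momentRatioNum; simp only [Pi.sub_apply]; ring)

lemma hasDerivAt_exp_mul_momentRatioNum (η : ℝ) :
    HasDerivAt (fun η => exp η * momentRatioNum η) (exp η * cauchySchwarzGap η) η :=
  ((hasDerivAt_exp η).mul (hasDerivAt_momentRatioNum η)).congr_deriv (by ring)

lemma strictMono_exp_mul_momentRatioNum : StrictMono fun η => exp η * momentRatioNum η := by
  refine strictMono_of_deriv_pos fun η => ?_
  rw [(hasDerivAt_exp_mul_momentRatioNum η).deriv]
  exact mul_pos (exp_pos η) (cauchySchwarzGap_pos η)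

lemma momentRatio_zero : momentRatio 0 = 15 / 2 := by
  norm_num [momentRatio, A_zero_right]

lemma momentRatioNum_zero : momentRatioNum 0 = 4 / 315 := by
  norm_num [momentRatioNum, A_zero_right]

lemma deriv_momentRatio_zero : deriv momentRatio 0 = 5 / 7 := by
  rw [(hasDerivAt_momentRatio 0).deriv, momentRatioNum_zero]
  norm_num [A_zero_right]

-- by the recurrence, `A₂ - A₄ = (3 e¹⁰ - 23 A₀)/400` at `η = -10`
lemma momentRatio_zero_lt_neg_ten : momentRatio 0 < momentRatio (-10) := by
  have h0 := exp_neg_eq_A_recurrence 0 (-10)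
  have h2 := exp_neg_eq_A_recurrence 2 (-10)
  have hA := A_zero_neg_ten_ge
  have he : 11 ≤ exp 10 := by linarith [add_one_le_exp 10]
  have he' : exp (-10) ≤ 1 := exp_le_one_iff.2 (by norm_num)
  rw [momentRatio_zero, momentRatio, lt_div_iff₀ (A_two_sub_A_four_pos _)]
  push_cast at h0 h2
  norm_num at h0 h2
  linarith

lemma exists_momentRatioNum_neg : ∃ c < 0, momentRatioNum c < 0 := by
  obtain ⟨c, hc, hslope⟩ :=
    exists_hasDerivAt_eq_slope momentRatio _ (by norm_num : (-10 : ℝ) < 0)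
    (fun x _ => (hasDerivAt_momentRatio x).continuousAt.continuousWithinAt)
    (fun x _ => hasDerivAt_momentRatio x)
  refine ⟨c, hc.2, ?_⟩
  have hneg : momentRatioNum c / (A 2 c - A 4 c) ^ 2 < 0 := by
    rw [hslope]
    exact div_neg_of_neg_of_pos (by linarith [momentRatio_zero_lt_neg_ten]) (by norm_num)
  exact neg_of_div_neg_left hneg (sq_nonneg _)

lemma exists_sign_change_momentRatioNum :
    ∃ s < 0, (∀ x < s, momentRatioNum x < 0) ∧ ∀ x, s < x → 0 < momentRatioNum x := by
  obtain ⟨c, hc, hNc⟩ := exists_momentRatioNum_neg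
  have hM : Continuous fun η => exp η * momentRatioNum η :=
    continuous_iff_continuousAt.2 fun η => (hasDerivAt_exp_mul_momentRatioNum η).continuousAt
  obtain ⟨s, hs, hMs⟩ := intermediate_value_Ioo hc.le hM.continuousOn
    ⟨mul_neg_of_pos_of_neg (exp_pos c) hNc, by rw [momentRatioNum_zero]; positivity⟩
  refine ⟨s, hs.2, fun x hx => ?_, fun x hx => ?_⟩
  · have h := strictMono_exp_mul_momentRatioNum hx
    rw [hMs] at h
    exact neg_of_mul_neg_right h (exp_pos x).le
  · have h := strictMono_exp_mul_momentRatioNum hx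
    rw [hMs] at h
    exact pos_of_mul_pos_right h (exp_pos x).le

/-- With `f(η) = A₀(η)/(A₂(η) − A₄(η))`, there is a unique `η*` such that `f` is
strictly decreasing on `(−∞, η*]` and strictly increasing on `[η*, ∞)`;
moreover `η* < 0`, `f(0) = 15/2` and `f'(0) = 5/7`. -/
theorem stmt_17 :
    (∃! ηs : ℝ,
      StrictAntiOn (fun η : ℝ => A 0 η / (A 2 η - A 4 η)) (Set.Iic ηs) ∧
      StrictMonoOn (fun η : ℝ => A 0 η / (A 2 η - A 4 η)) (Set.Ici ηs)) ∧
    (∀ ηs : ℝ,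
      (StrictAntiOn (fun η : ℝ => A 0 η / (A 2 η - A 4 η)) (Set.Iic ηs) ∧
       StrictMonoOn (fun η : ℝ => A 0 η / (A 2 η - A 4 η)) (Set.Ici ηs)) →
      ηs < 0) ∧
    A 0 0 / (A 2 0 - A 4 0) = 15 / 2 ∧
    deriv (fun η : ℝ => A 0 η / (A 2 η - A 4 η)) 0 = 5 / 7 := by
  obtain ⟨s, hs, hneg, hpos⟩ := exists_sign_change_momentRatioNum
  have hvalley : StrictAntiOn momentRatio (Iic s) ∧ StrictMonoOn momentRatio (Ici s) :=
    strictAntiOn_Iic_and_strictMonoOn_Ici_of_hasDerivAt hasDerivAt_momentRatio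
      (fun x hx => div_neg_of_neg_of_pos (hneg x hx) (pow_pos (A_two_sub_A_four_pos x) 2))
      (fun x hx => div_pos (hpos x hx) (pow_pos (A_two_sub_A_four_pos x) 2))
  have huniq : ∀ t, StrictAntiOn momentRatio (Iic t) ∧ StrictMonoOn momentRatio (Ici t) → t = s :=
    fun t ht => eq_of_strictAntiOn_Iic_of_strictMonoOn_Ici ht hvalley
  exact ⟨⟨s, hvalley, huniq⟩, fun t ht => huniq t ht ▸ hs, momentRatio_zero, deriv_momentRatio_zero⟩
end

section
/- Define f(η) = A_0(η)/(A_2(η) − A_4(η)). Then for every η ∈ ℝ, η/f(η) = (A_0(η) − 3 A_2(η))/(2 A_0(η)) ∈ (−1, 1/2); consequently f(η) > 2η and f(η) > −η for all η, and f(η) → +∞ as η → +∞ and as η → −∞. -/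
open Real MeasureTheory Set Filter

/-
Differentiating `z ^ (k + 1) * exp (-η z²)` and integrating over `[0, 1]` gives the recurrence
`(k + 1) A_k − 2η A_{k+2} = e^{-η}`. Comparing `k = 0` with `k = 2` yields
`A_0 − 3 A_2 = 2η (A_2 − A_4)`, so `η / f(η) = (A_0 − 3 A_2) / (2 A_0)`; this lies in `(−1, 1/2)`
because `0 < A_2 < A_0`. Since `f > 0`, the two bounds are `f > 2η` and `f > −η`, and these force
`f → +∞` at `±∞`.
-/

lemma continuous_pow_mul_exp (k : ℕ) (η : ℝ) :
    Continuous fun z : ℝ => z ^ k * exp (-η * z ^ 2) := by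
  fun_prop

lemma intervalIntegrable_pow_mul_exp (k : ℕ) (η : ℝ) :
    IntervalIntegrable (fun z : ℝ => z ^ k * exp (-η * z ^ 2)) volume 0 1 :=
  (continuous_pow_mul_exp k η).intervalIntegrable _ _

lemma A_pos (k : ℕ) (η : ℝ) : 0 < A k η :=
  intervalIntegral.intervalIntegral_pos_of_pos_on (intervalIntegrable_pow_mul_exp k η)
    (fun _ hz => mul_pos (pow_pos hz.1 k) (exp_pos _)) zero_lt_one

lemma A_lt_A {j k : ℕ} (hjk : j < k) (η : ℝ) : A k η < A j η := by
  refine intervalIntegral.integral_lt_integral_of_continuousOn_of_le_of_exists_lt zero_lt_one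
    (continuous_pow_mul_exp k η).continuousOn (continuous_pow_mul_exp j η).continuousOn
    (fun z hz => ?_) ⟨(1 / 2 : ℝ), ⟨by norm_num, by norm_num⟩, ?_⟩
  · exact mul_le_mul_of_nonneg_right (pow_le_pow_of_le_one hz.1.le hz.2 hjk.le) (exp_pos _).le
  · exact mul_lt_mul_of_pos_right
      (pow_lt_pow_right_of_lt_one₀ (by norm_num) (by norm_num) hjk) (exp_pos _)

lemma A_recurrence (k : ℕ) (η : ℝ) :
    (k + 1) * A k η - 2 * η * A (k + 2) η = exp (-η) := by
  have hderiv : ∀ z : ℝ, HasDerivAt (fun z : ℝ => z ^ (k + 1) * exp (-η * z ^ 2))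
      ((k + 1) * (z ^ k * exp (-η * z ^ 2)) - 2 * η * (z ^ (k + 2) * exp (-η * z ^ 2))) z := by
    intro z
    refine ((hasDerivAt_pow (k + 1) z).mul
      (((hasDerivAt_pow 2 z).const_mul (-η)).exp)).congr_deriv ?_
    simp only [Nat.add_sub_cancel, Nat.cast_add, Nat.cast_one, Nat.cast_ofNat]
    ring
  have hftc := intervalIntegral.integral_eq_sub_of_hasDerivAt (fun z _ => hderiv z)
    (((intervalIntegrable_pow_mul_exp k η).const_mul _).sub
      ((intervalIntegrable_pow_mul_exp (k + 2) η).const_mul _))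
  rw [intervalIntegral.integral_sub ((intervalIntegrable_pow_mul_exp k η).const_mul _)
      ((intervalIntegrable_pow_mul_exp (k + 2) η).const_mul _),
    intervalIntegral.integral_const_mul, intervalIntegral.integral_const_mul] at hftc
  simpa [A] using hftc

lemma A_zero_sub_three_mul_A_two (η : ℝ) :
    A 0 η - 3 * A 2 η = 2 * η * (A 2 η - A 4 η) := by
  have h0 := A_recurrence 0 η
  have h2 := A_recurrence 2 η
  push_cast at h0 h2
  linarith

noncomputable def f (η : ℝ) : ℝ :=
  A 0 η / (A 2 η - A 4 η)

lemma f_pos (η : ℝ) : 0 < f η :=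
  div_pos (A_pos 0 η) (sub_pos.mpr (A_lt_A (show 2 < 4 by norm_num) η))

lemma div_f_eq (η : ℝ) : η / f η = (A 0 η - 3 * A 2 η) / (2 * A 0 η) := by
  have hA0 := A_pos 0 η
  rw [f, A_zero_sub_three_mul_A_two]
  field_simp

lemma neg_one_lt_div_f (η : ℝ) : -1 < η / f η := by
  have hA0 := A_pos 0 η
  have hA20 := A_lt_A (show 0 < 2 by norm_num) η
  rw [div_f_eq, lt_div_iff₀ (by positivity)]
  linarith

lemma div_f_lt_half (η : ℝ) : η / f η < 1 / 2 := by
  have hA0 := A_pos 0 η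
  have hA2 := A_pos 2 η
  rw [div_f_eq, div_lt_iff₀ (by positivity)]
  linarith

lemma two_mul_lt_f (η : ℝ) : 2 * η < f η := by
  have h := div_f_lt_half η
  rw [div_lt_iff₀ (f_pos η)] at h
  linarith

lemma neg_lt_f (η : ℝ) : -η < f η := by
  have h := neg_one_lt_div_f η
  rw [lt_div_iff₀ (f_pos η)] at h
  linarith

lemma tendsto_f_atTop : Tendsto f atTop atTop :=
  tendsto_atTop_mono (fun η => (two_mul_lt_f η).le) (tendsto_id.const_mul_atTop two_pos)

lemma tendsto_f_atBot : Tendsto f atBot atTop :=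
  tendsto_atTop_mono (fun η => (neg_lt_f η).le) tendsto_neg_atBot_atTop

/-- With `f(η) = A₀(η)/(A₂(η) − A₄(η))`, for all `η`:
`η/f(η) = (A₀(η) − 3A₂(η))/(2A₀(η)) ∈ (−1, 1/2)`, hence `f(η) > 2η` and
`f(η) > −η`; and `f(η) → +∞` as `η → ±∞`. -/
theorem stmt_18 :
    (∀ η : ℝ,
      η / (A 0 η / (A 2 η - A 4 η)) = (A 0 η - 3 * A 2 η) / (2 * A 0 η) ∧
      -1 < (A 0 η - 3 * A 2 η) / (2 * A 0 η) ∧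
      (A 0 η - 3 * A 2 η) / (2 * A 0 η) < 1 / 2 ∧
      A 0 η / (A 2 η - A 4 η) > 2 * η ∧
      A 0 η / (A 2 η - A 4 η) > -η) ∧
    Tendsto (fun η : ℝ => A 0 η / (A 2 η - A 4 η)) atTop atTop ∧
    Tendsto (fun η : ℝ => A 0 η / (A 2 η - A 4 η)) atBot atTop :=
  ⟨fun η => ⟨div_f_eq η, div_f_eq η ▸ neg_one_lt_div_f η, div_f_eq η ▸ div_f_lt_half η,
      two_mul_lt_f η, neg_lt_f η⟩,
    tendsto_f_atTop, tendsto_f_atBot⟩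
end
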